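/- Let 𝔠 denote the Cantor set, A an index set, P a proper closed subset of 𝔠^A, and f a self-homeomorphism of P. Suppose there exist a proper subset B ⊊ A and a self-homeomorphism f_B of P_B = π_B(P) such that: P = P_B × 𝔠^{A∖B} (under the identification 𝔠^A = 𝔠^B × 𝔠^{A∖B}); f_B ∘ π_B = π_B ∘ f on P; and f_B can be extended to a homeomorphism in H(𝔠^B). Then f can be extended to a homeomorphism in H(𝔠^A). -/

import Mathlib

/-!
Write `𝔠^A = 𝔠^B × 2^μ` with `μ = (A ∖ B) × ℕ`. Since `f` covers `f_B`, it acts on the fibre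
`2^μ` over each point `k` of `P_B` by a homeomorphism `h k`, continuously in `k`; composing
`F_B × id` with any continuous extension of `k ↦ h k` to all of `𝔠^B` extends `f`.

The family `h` is extended by Zorn's lemma over partial extensions that are correct on a set
`S ⊆ μ` of coordinates and act on those alone. Each coordinate of `h k` and of `(h k)⁻¹`
depends on finitely many coordinates, so a missing coordinate `j₀` lies in a countable set `N`
such that `S ∪ N` is closed under this dependence; over `𝔠^B × 2^S`, the action of `h` on the
coordinates in `N` is then a family of homeomorphisms of `2^N`. For countable `N` this family
is extended as the limit of locally constant approximations, the `i`-th being correct on the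
first `i` coordinates of `N`; each is obtained from the previous one through a clopen partition
of the zero-dimensional base.
-/

universe u v

open Set

/-- The projection of the product `∀ i, X i` onto the partial product indexed by `B`. -/
def proj {I : Type u} {X : I → Type v} (B : Set I) (x : ∀ i, X i) : ∀ b : B, X b :=
  fun b => x b

open Function Filter Topology
open scoped Classical

noncomputable section

section ZeroDimensional

variable {X Y : Type*} [TopologicalSpace X] [TopologicalSpace Y]

theorem isLocallyConstant_curry_of_compactSpace [CompactSpace Y] {D : Type*} [TopologicalSpace D]
    [DiscreteTopology D] {F : X × Y → D} (hF : Continuous F) :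
    IsLocallyConstant fun x y => F (x, y) := by
  have hF' := (IsLocallyConstant.iff_continuous F).2 hF
  refine (IsLocallyConstant.iff_eventually_eq _).2 fun x₀ => ?_
  have : ∀ᶠ x in 𝓝 x₀, ∀ y ∈ univ, F (x, y) = F (x₀, y) := by
    refine isCompact_univ.eventually_forall_of_forall_eventually fun y _ => ?_
    have h₀ : ∀ᶠ z : X × Y in 𝓝 (x₀, y), (x₀, z.2) ∈ {z' | F z' = F (x₀, y)} :=
      (continuous_const.prodMk continuous_snd).continuousAt.preimage_mem_nhds
        (hF'.eventually_eq (x₀, y))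
    filter_upwards [hF'.eventually_eq (x₀, y), h₀] with z h₁ h₂ using h₁.trans h₂.symm
  filter_upwards [this] with x hx using funext fun y => hx y (mem_univ y)

theorem IsLocallyConstant.exists_extension [CompactSpace X] [T2Space X]
    [TotallyDisconnectedSpace X] {V : Type*} [Nonempty V] {K : Set X} (hK : IsClosed K)
    {g : K → V} (hg : IsLocallyConstant g) :
    ∃ g' : X → V, IsLocallyConstant g' ∧ ∀ k : K, g' k = g k := by
  have : CompactSpace K := isCompact_iff_compactSpace.1 hK.isCompact
  rcases isEmpty_or_nonempty K with hKe | ⟨⟨k₀⟩⟩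
  · exact ⟨fun _ => Classical.arbitrary V, .const _, fun k => isEmptyElim k⟩
  have : Finite (range g) := hg.range_finite.to_subtype
  obtain ⟨U, hU, hgU, -, hcov, hdisj⟩ := exists_clopen_partition_of_clopen_cover
    (Z := fun v : range g => ((↑) : K → X) '' (g ⁻¹' {v.1})) (D := fun _ => univ)
    (fun v => hK.isClosedMap_subtype_val _ (hg.isClosed_fiber v.1)) (fun _ => isClopen_univ)
    (fun _ => subset_univ _) fun v _ w _ hvw => by
      refine disjoint_left.2 ?_
      rintro _ ⟨k, hk, rfl⟩ ⟨k', hk', hkk'⟩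
      rw [mem_preimage, mem_singleton_iff] at hk hk'
      exact hvw (Subtype.ext (by rw [← hk, ← hk', Subtype.ext hkk']))
  have hmem : ∀ x, ∃ v, x ∈ U v := fun x =>
    mem_iUnion.1 (hcov (mem_iUnion.2 ⟨⟨g k₀, k₀, rfl⟩, mem_univ x⟩))
  have huniq : ∀ x v, x ∈ U v → (hmem x).choose = v := fun x v hx => by
    by_contra hne
    exact disjoint_left.1 (hdisj (mem_univ _) (mem_univ _) hne) (hmem x).choose_spec hx
  refine ⟨fun x => (hmem x).choose.1, (IsLocallyConstant.iff_exists_open _).2 fun x => ?_,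
    fun k => congrArg Subtype.val (huniq k ⟨g k, k, rfl⟩ (hgU _ ⟨k, rfl, rfl⟩))⟩
  obtain ⟨v, hv⟩ := hmem x
  exact ⟨U v, (hU v).isOpen, hv, fun x' hx' => by rw [huniq x' v hx', huniq x v hv]⟩

theorem exists_finset_dependsOn [CompactSpace X] {μ α β : Type*} [TopologicalSpace α]
    [DiscreteTopology α] [CompactSpace α] [TopologicalSpace β] [DiscreteTopology β]
    {F : X × (μ → α) → β}
    (hF : Continuous F) : ∃ D : Finset μ, ∀ x, DependsOn (fun c => F (x, c)) D := by
  have hlocal : ∀ p : X × (μ → α), ∃ U ∈ 𝓝 p, ∃ I : Finset μ,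
      ∀ q ∈ U, ∀ c, (∀ i ∈ I, c i = q.2 i) → F (q.1, c) = F q := by
    intro p
    have hp : F ⁻¹' {F p} ∈ 𝓝 p := hF.continuousAt.preimage_mem_nhds (by simp)
    rw [nhds_prod_eq, Filter.mem_prod_iff] at hp
    obtain ⟨V, hV, W, hW, hVW⟩ := hp
    rw [nhds_pi, Filter.mem_pi'] at hW
    obtain ⟨I, t, ht, hIt⟩ := hW
    have hF_eq : ∀ y ∈ V, ∀ c, (∀ i ∈ I, c i = p.2 i) → F (y, c) = F p := fun y hy c hc =>
      hVW ⟨hy, hIt fun i hi => by simp only [hc i hi]; exact mem_of_mem_nhds (ht i)⟩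
    refine ⟨V ×ˢ (I : Set μ).pi fun i => {p.2 i},
      prod_mem_nhds hV (set_pi_mem_nhds I.finite_toSet fun i _ => by simp), I, ?_⟩
    rintro ⟨y, c₀⟩ ⟨hy, hc₀⟩ c hc
    exact (hF_eq y hy c fun i hi => (hc i hi).trans (hc₀ i hi)).trans
      (hF_eq y hy c₀ fun i hi => hc₀ i hi).symm
  choose U hU I hI using hlocal
  obtain ⟨t, -, ht⟩ := isCompact_univ.elim_nhds_subcover U fun p _ => hU p
  refine ⟨t.biUnion I, fun x c c' hcc' => ?_⟩
  obtain ⟨p, hpt, hp⟩ := mem_iUnion₂.1 (ht (mem_univ (x, c)))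
  exact (hI p _ hp c' fun i hi => (hcc' i (Finset.mem_biUnion.2 ⟨p, hpt, hi⟩)).symm).symm

theorem IsLocallyConstant.continuous_uncurry {φ : X → Y ≃ₜ Y} (hφ : IsLocallyConstant φ) :
    Continuous fun p : X × Y => φ p.1 p.2 := by
  refine continuous_iff_continuousAt.2 fun p => ?_
  have : ∀ᶠ q : X × Y in 𝓝 p, φ p.1 q.2 = φ q.1 q.2 := by
    filter_upwards [continuous_fst.continuousAt.preimage_mem_nhds (hφ.eventually_eq p.1)]
      with q hq using by rw [show φ q.1 = φ p.1 from hq]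
  exact ((φ p.1).continuous.comp continuous_snd).continuousAt.congr this

theorem continuous_symm_uncurry_of_compactSpace [CompactSpace X] [T2Space X] [CompactSpace Y]
    [T2Space Y] {u : X → Y ≃ₜ Y} (hu : Continuous fun p : X × Y => u p.1 p.2) :
    Continuous fun p : X × Y => (u p.1).symm p.2 :=
  continuous_snd.comp <| (continuous_fst.prodMk hu).continuous_symm_of_equiv_compact_to_t2
    (f := Equiv.prodShear (Equiv.refl X) fun x => (u x).toEquiv)

end ZeroDimensional

section LocalMaps

variable {μ α : Type*} {S T N : Set μ}

def Descends (S : Set μ) (g : (μ → α) → μ → α) : Prop :=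
  ∀ j ∈ S, DependsOn (fun c => g c j) S

def IsLocal (S : Set μ) (g : (μ → α) → μ → α) : Prop :=
  Descends S g ∧ ∀ c, ∀ j ∉ S, g c j = c j

theorem IsLocal.mono {g : (μ → α) → μ → α} (hg : IsLocal S g) (hST : S ⊆ T) : IsLocal T g := by
  refine ⟨fun j hj c c' hcc' => ?_, fun c j hj => hg.2 c j fun h => hj (hST h)⟩
  by_cases hjS : j ∈ S
  · exact hg.1 j hjS fun i hi => hcc' i (hST hi)
  · simp only [hg.2 _ j hjS]
    exact hcc' j hj

theorem IsLocal.comp {g g' : (μ → α) → μ → α} (hg : IsLocal S g) (hg' : IsLocal S g') :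
    IsLocal S (g ∘ g') :=
  ⟨fun j hj _ _ hcc' => hg.1 j hj fun i hi => hg'.1 i hi hcc',
    fun c j hj => (hg.2 _ j hj).trans (hg'.2 c j hj)⟩

theorem IsLocal.symm_apply_of_notMem {e : (μ → α) ≃ (μ → α)} (he : IsLocal S e) (c : μ → α)
    {j : μ} (hj : j ∉ S) : e.symm c j = c j := by
  conv_rhs => rw [← e.apply_symm_apply c]
  exact (he.2 _ j hj).symm

theorem IsLocal.eq_symm_apply {e : (μ → α) ≃ (μ → α)} (he : IsLocal S e) {c d : μ → α}
    (h : ∀ j ∈ S, e d j = c j) : ∀ j ∈ S, d j = e.symm c j := by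
  have : e (S.piecewise d (e.symm c)) = c := by
    funext j
    by_cases hj : j ∈ S
    · rw [← h j hj]
      exact he.1 j hj fun i hi => by simp [hi]
    · rw [he.2 _ j hj, S.piecewise_eq_of_notMem _ _ hj, he.symm_apply_of_notMem c hj]
  intro j hj
  rw [← this, e.symm_apply_apply, S.piecewise_eq_of_mem _ _ hj]

theorem IsLocal.symm {e : (μ → α) ≃ (μ → α)} (he : IsLocal S e) : IsLocal S e.symm :=
  ⟨fun j hj c c' hcc' =>
    he.eq_symm_apply (fun i hi => by rw [e.apply_symm_apply, hcc' i hi]) j hj,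
    fun c _ hj => he.symm_apply_of_notMem c hj⟩

theorem leftInverse_glue {E : μ → (μ → α) ≃ (μ → α)} {T : μ → Set μ}
    (hE : ∀ j, IsLocal (T j) (E j))
    (hcompat : ∀ j, ∀ i ∈ T j, ∀ c, E i c i = E j c i ∧ (E i).symm c i = (E j).symm c i) :
    LeftInverse (fun c j => (E j).symm c j) (fun c j => E j c j) := by
  intro c
  funext j
  by_cases hj : j ∈ T j
  · have := (hE j).symm.1 j hj fun i hi => (hcompat j i hi c).1
    simp only at this ⊢
    rw [this, Equiv.symm_apply_apply]
  · simp only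
    rw [(hE j).symm_apply_of_notMem _ hj, (hE j).2 c j hj]

/-- The action of `g` on the coordinates in `N` over the base point `a|_S`. -/
def sliceFun (g : (μ → α) → μ → α) (S N : Set μ) (a c : μ → α) : μ → α :=
  N.piecewise (g (S.piecewise a c)) c

theorem sliceFun_apply_of_mem (g : (μ → α) → μ → α) (a c : μ → α) {j : μ} (hj : j ∈ N) :
    sliceFun g S N a c j = g (S.piecewise a c) j :=
  N.piecewise_eq_of_mem _ _ hj

theorem sliceFun_apply_of_notMem (g : (μ → α) → μ → α) (a c : μ → α) {j : μ} (hj : j ∉ N) :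
    sliceFun g S N a c j = c j :=
  N.piecewise_eq_of_notMem _ _ hj

theorem sliceFun_sliceFun {g g' : (μ → α) → μ → α} (hSN : Disjoint S N) (hg : Descends S g)
    (hg' : Descends (S ∪ N) g') (hgg' : LeftInverse g' g) (a c : μ → α) :
    sliceFun g' S N (g a) (sliceFun g S N a c) = c := by
  funext j
  by_cases hjN : j ∈ N
  · have hagree : ∀ i ∈ S ∪ N,
        S.piecewise (g a) (sliceFun g S N a c) i = g (S.piecewise a c) i := by
      rintro i (hi | hi)
      · rw [S.piecewise_eq_of_mem _ _ hi]
        exact hg i hi fun i' hi' => by simp [hi']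
      · rw [S.piecewise_eq_of_notMem _ _ (disjoint_right.1 hSN hi), sliceFun_apply_of_mem _ _ _ hi]
    have hdep : g' (S.piecewise (g a) (sliceFun g S N a c)) j = g' (g (S.piecewise a c)) j :=
      hg' j (Or.inr hjN) hagree
    rw [sliceFun_apply_of_mem _ _ _ hjN, hdep, hgg',
      S.piecewise_eq_of_notMem _ _ (disjoint_right.1 hSN hjN)]
  · rw [sliceFun_apply_of_notMem _ _ _ hjN, sliceFun_apply_of_notMem _ _ _ hjN]

variable [TopologicalSpace α]

def AgreesOn (S : Set μ) (e e' : (μ → α) ≃ₜ (μ → α)) : Prop :=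
  ∀ c, ∀ j ∈ S, e c j = e' c j ∧ e.symm c j = e'.symm c j

theorem AgreesOn.refl (S : Set μ) (e : (μ → α) ≃ₜ (μ → α)) : AgreesOn S e e :=
  fun _ _ _ => ⟨rfl, rfl⟩

theorem AgreesOn.symm {e e' : (μ → α) ≃ₜ (μ → α)} (h : AgreesOn S e e') : AgreesOn S e' e :=
  fun c j hj => ⟨(h c j hj).1.symm, (h c j hj).2.symm⟩

theorem AgreesOn.trans {e e' e'' : (μ → α) ≃ₜ (μ → α)} (h : AgreesOn S e e')
    (h' : AgreesOn S e' e'') : AgreesOn S e e'' :=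
  fun c j hj => ⟨(h c j hj).1.trans (h' c j hj).1, (h c j hj).2.trans (h' c j hj).2⟩

theorem AgreesOn.mono {e e' : (μ → α) ≃ₜ (μ → α)} (h : AgreesOn T e e') (hST : S ⊆ T) :
    AgreesOn S e e' :=
  fun c j hj => h c j (hST hj)

def Homeomorph.glue (E : μ → (μ → α) ≃ₜ (μ → α)) {T : μ → Set μ} (hE : ∀ j, IsLocal (T j) (E j))
    (hcompat : ∀ j, ∀ i ∈ T j, ∀ c, E i c i = E j c i ∧ (E i).symm c i = (E j).symm c i) :
    (μ → α) ≃ₜ (μ → α) where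
  toFun c j := E j c j
  invFun c j := (E j).symm c j
  left_inv := leftInverse_glue (E := fun j => (E j).toEquiv) hE hcompat
  right_inv := leftInverse_glue (E := fun j => (E j).symm.toEquiv) (fun j => (hE j).symm)
    fun j i hi c => (hcompat j i hi c).symm
  continuous_toFun := continuous_pi fun j => (continuous_apply j).comp (E j).continuous
  continuous_invFun := continuous_pi fun j => (continuous_apply j).comp (E j).symm.continuous

theorem Continuous.piecewise_pi {Y : Type*} [TopologicalSpace Y] {f g : Y → μ → α}
    (hf : Continuous f) (hg : Continuous g) : Continuous fun y => S.piecewise (f y) (g y) :=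
  continuous_pi fun j => by
    by_cases hj : j ∈ S
    · simp only [S.piecewise_eq_of_mem _ _ hj]
      exact (continuous_apply j).comp hf
    · simp only [S.piecewise_eq_of_notMem _ _ hj]
      exact (continuous_apply j).comp hg

def slice (e : (μ → α) ≃ₜ (μ → α)) (hSN : Disjoint S N)
    (hS : Descends S e ∧ Descends S e.symm) (hSN' : Descends (S ∪ N) e ∧ Descends (S ∪ N) e.symm)
    (a : μ → α) : (μ → α) ≃ₜ (μ → α) where
  toFun := sliceFun e S N a
  invFun := sliceFun e.symm S N (e a)
  left_inv := sliceFun_sliceFun hSN hS.1 hSN'.2 e.symm_apply_apply a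
  right_inv c := by
    simpa using sliceFun_sliceFun hSN hS.2 hSN'.1 e.apply_symm_apply (e a) c
  continuous_toFun :=
    (e.continuous.comp (continuous_const.piecewise_pi continuous_id)).piecewise_pi continuous_id
  continuous_invFun :=
    (e.symm.continuous.comp (continuous_const.piecewise_pi continuous_id)).piecewise_pi
      continuous_id

theorem slice_apply (e : (μ → α) ≃ₜ (μ → α)) (hSN : Disjoint S N)
    (hS : Descends S e ∧ Descends S e.symm) (hSN' : Descends (S ∪ N) e ∧ Descends (S ∪ N) e.symm)
    (a c : μ → α) : slice e hSN hS hSN' a c = sliceFun e S N a c :=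
  rfl

end LocalMaps

section CoordinateLimit

variable {μ α : Type*} [TopologicalSpace α]

theorem tendsto_of_eventually_coord_eq {e : ℕ → (μ → α) → μ → α} {f : (μ → α) → μ → α}
    (he : ∀ j, ∀ᶠ i in atTop, ∀ c, e i c j = f c j) (c : μ → α) :
    Tendsto (fun i => e i c) atTop (𝓝 (f c)) :=
  tendsto_pi_nhds.2 fun j => tendsto_const_nhds.congr' ((he j).mono fun _ hi => (hi c).symm)

theorem continuous_of_eventually_coord_eq {e : ℕ → (μ → α) → μ → α} {f : (μ → α) → μ → α}
    (hcont : ∀ i, Continuous (e i)) (he : ∀ j, ∀ᶠ i in atTop, ∀ c, e i c j = f c j) :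
    Continuous f :=
  continuous_pi fun j => by
    obtain ⟨i, hi⟩ := (he j).exists
    exact ((continuous_apply j).comp (hcont i)).congr hi

theorem leftInverse_of_eventually_coord_eq [T2Space α] {e e' : ℕ → (μ → α) → μ → α}
    {f g : (μ → α) → μ → α} (hinv : ∀ i, LeftInverse (e' i) (e i)) (hg : Continuous g)
    (he : ∀ j, ∀ᶠ i in atTop, ∀ c, e i c j = f c j)
    (he' : ∀ j, ∀ᶠ i in atTop, ∀ c, e' i c j = g c j) : LeftInverse g f := fun c =>
  funext fun j => tendsto_nhds_unique
    (((continuous_apply j).comp hg).tendsto _ |>.comp (tendsto_of_eventually_coord_eq he c))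
    (tendsto_const_nhds.congr' ((he' j).mono fun i hi => by simp [← hi, hinv i c]))

def Homeomorph.ofEventuallyCoordEq [T2Space α] (e : ℕ → (μ → α) ≃ₜ (μ → α))
    (f g : (μ → α) → μ → α) (hf : ∀ j, ∀ᶠ i in atTop, ∀ c, e i c j = f c j)
    (hg : ∀ j, ∀ᶠ i in atTop, ∀ c, (e i).symm c j = g c j) : (μ → α) ≃ₜ (μ → α) where
  toFun := f
  invFun := g
  left_inv := leftInverse_of_eventually_coord_eq (fun i => (e i).symm_apply_apply)
    (continuous_of_eventually_coord_eq (fun i => (e i).symm.continuous) hg) hf hg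
  right_inv := leftInverse_of_eventually_coord_eq (fun i => (e i).apply_symm_apply)
    (continuous_of_eventually_coord_eq (fun i => (e i).continuous) hf) hg hf
  continuous_toFun := continuous_of_eventually_coord_eq (fun i => (e i).continuous) hf
  continuous_invFun := continuous_of_eventually_coord_eq (fun i => (e i).symm.continuous) hg

end CoordinateLimit

theorem exists_seq_of_forall_exists {β : Type*} {p : ℕ → β → Prop} {r : ℕ → β → β → Prop}
    {b₀ : β} (h₀ : p 0 b₀) (hstep : ∀ i b, p i b → ∃ b', p (i + 1) b' ∧ r i b b') :
    ∃ s : ℕ → β, ∀ i, p i (s i) ∧ r i (s i) (s (i + 1)) := by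
  choose! next hnext using hstep
  let s : ℕ → β := fun i => Nat.rec b₀ next i
  have hs : ∀ i, p i (s i) := fun i => Nat.rec h₀ (fun i hi => (hnext i _ hi).1) i
  exact ⟨s, fun i => ⟨hs i, (hnext i _ (hs i)).2⟩⟩

section CountableExtension

variable {X μ : Type*} [TopologicalSpace X] {K : Set X} {w : K → (μ → Bool) ≃ₜ (μ → Bool)}
  {N : Set μ}

variable (w N) in
def IsLocallyConstantApprox (J : Set μ) (φ : X → (μ → Bool) ≃ₜ (μ → Bool)) : Prop :=
  IsLocallyConstant φ ∧ (∀ x, IsLocal N (φ x)) ∧ ∀ k : K, AgreesOn J (φ k) (w k)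

variable [CompactSpace X] [T2Space X] [TotallyDisconnectedSpace X]

theorem IsLocallyConstantApprox.exists_refine (hK : IsClosed K)
    (hw : Continuous fun p : K × (μ → Bool) => w p.1 p.2) (hwN : ∀ k, IsLocal N (w k))
    {J J' : Set μ} (hJ' : J'.Finite) {φ : X → (μ → Bool) ≃ₜ (μ → Bool)}
    (hφ : IsLocallyConstantApprox w N J φ) :
    ∃ ψ, IsLocallyConstantApprox w N J' ψ ∧ ∀ x, AgreesOn J (ψ x) (φ x) := by
  have : CompactSpace K := isCompact_iff_compactSpace.1 hK.isCompact
  have : Finite J' := hJ'.to_subtype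
  let germ : K → (μ → Bool) → J' → Bool × Bool := fun k c j => (w k c j, (w k).symm c j)
  have hgerm : IsLocallyConstant germ :=
    isLocallyConstant_curry_of_compactSpace (F := fun p : K × (μ → Bool) => germ p.1 p.2)
      (continuous_pi fun j => ((continuous_apply j.1).comp hw).prodMk
        ((continuous_apply j.1).comp (continuous_symm_uncurry_of_compactSpace hw)))
  obtain ⟨germ', hgerm', hext⟩ := hgerm.exists_extension hK
  -- where the extended germ and `φ` take their values at a point `k` of `K`, use `w k`
  let choice : ((μ → Bool) → J' → Bool × Bool) → ((μ → Bool) ≃ₜ (μ → Bool)) →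
      (μ → Bool) ≃ₜ (μ → Bool) := fun γ e =>
    if h : ∃ k : K, germ k = γ ∧ φ k = e then w h.choose else e
  refine ⟨fun x => choice (germ' x) (φ x), ⟨hgerm'.comp₂ hφ.1 choice, fun x => ?_, fun k => ?_⟩,
    fun x => ?_⟩
  · by_cases h : ∃ k : K, germ k = germ' x ∧ φ k = φ x
    · simp only [choice, dif_pos h]
      exact hwN _
    · simp only [choice, dif_neg h]
      exact hφ.2.1 x
  · have h : ∃ k' : K, germ k' = germ' k ∧ φ k' = φ k := ⟨k, (hext k).symm, rfl⟩
    have hgerm_eq : germ h.choose = germ k := h.choose_spec.1.trans (hext k)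
    simp only [choice, dif_pos h]
    exact fun c j hj => Prod.ext_iff.1 (congrFun (congrFun hgerm_eq c) ⟨j, hj⟩)
  · by_cases h : ∃ k : K, germ k = germ' x ∧ φ k = φ x
    · simp only [choice, dif_pos h]
      have hagree := (hφ.2.2 h.choose).symm
      rwa [h.choose_spec.2] at hagree
    · simp only [choice, dif_neg h]
      exact .refl _ _

theorem exists_seq_isLocallyConstantApprox (hK : IsClosed K)
    (hw : Continuous fun p : K × (μ → Bool) => w p.1 p.2) (hwN : ∀ k, IsLocal N (w k))
    {rank : μ → ℕ} (hrank : InjOn rank N) :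
    ∃ φ : ℕ → X → (μ → Bool) ≃ₜ (μ → Bool), ∀ i,
      IsLocallyConstantApprox w N {j ∈ N | rank j < i} (φ i) ∧
      ∀ i', i ≤ i' → ∀ x, AgreesOn {j ∈ N | rank j < i} (φ i' x) (φ i x) := by
  have hfinite : ∀ i, {j ∈ N | rank j < i}.Finite := fun i =>
    ((finite_Iio i).subset (image_subset_iff.2 fun j hj => hj.2)).of_finite_image
      (hrank.mono fun j hj => hj.1)
  have h₀ : IsLocallyConstantApprox w N {j ∈ N | rank j < 0} fun _ => .refl (μ → Bool) :=
    ⟨.const _, fun _ => ⟨fun j _ _ _ h => h j ‹_›, fun _ _ _ => rfl⟩,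
      fun _ _ j hj => absurd hj.2 (Nat.not_lt_zero _)⟩
  obtain ⟨φ, hφ⟩ := exists_seq_of_forall_exists
    (p := fun i φ => IsLocallyConstantApprox w N {j ∈ N | rank j < i} φ)
    (r := fun i (φ ψ : X → (μ → Bool) ≃ₜ (μ → Bool)) =>
      ∀ x, AgreesOn {j ∈ N | rank j < i} (ψ x) (φ x))
    h₀ fun i _ hφ => hφ.exists_refine hK hw hwN (hfinite (i + 1))
  refine ⟨φ, fun i => ⟨(hφ i).1, fun i' hii' => ?_⟩⟩
  induction i', hii' using Nat.le_induction with
  | base => exact fun x => .refl _ _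
  | succ i' hii' ih =>
    exact fun x => ((hφ i').2 x |>.mono fun j hj => ⟨hj.1, hj.2.trans_le hii'⟩).trans (ih x)

theorem exists_extension_of_countable (hK : IsClosed K)
    (hw : Continuous fun p : K × (μ → Bool) => w p.1 p.2) (hwN : ∀ k, IsLocal N (w k))
    (hN : N.Countable) :
    ∃ u : X → (μ → Bool) ≃ₜ (μ → Bool), Continuous (fun p : X × (μ → Bool) => u p.1 p.2) ∧
      (∀ x, IsLocal N (u x)) ∧ ∀ k : K, u k = w k := by
  obtain ⟨rank, hrank⟩ := countable_iff_exists_injOn.1 hN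
  obtain ⟨φ, hφ⟩ := exists_seq_isLocallyConstantApprox hK hw hwN hrank
  have hlocal : ∀ i x, IsLocal N (φ i x) := fun i => (hφ i).1.2.1
  have hstable : ∀ x j, ∀ᶠ i in atTop, ∀ c,
      φ i x c j = φ (rank j + 1) x c j ∧ (φ i x).symm c j = (φ (rank j + 1) x).symm c j := by
    intro x j
    filter_upwards [eventually_ge_atTop (rank j + 1)] with i hi c
    by_cases hj : j ∈ N
    · exact (hφ _).2 i hi x c j ⟨hj, Nat.lt_succ_self _⟩
    · exact ⟨((hlocal i x).2 c j hj).trans ((hlocal _ x).2 c j hj).symm,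
        ((hlocal i x).symm_apply_of_notMem c hj).trans
          ((hlocal _ x).symm_apply_of_notMem c hj).symm⟩
  let u : X → (μ → Bool) ≃ₜ (μ → Bool) := fun x =>
    .ofEventuallyCoordEq (fun i => φ i x) (fun c j => φ (rank j + 1) x c j)
      (fun c j => (φ (rank j + 1) x).symm c j) (fun j => (hstable x j).mono fun _ h c => (h c).1)
      (fun j => (hstable x j).mono fun _ h c => (h c).2)
  have hu : Continuous fun p : X × (μ → Bool) => u p.1 p.2 := continuous_pi fun j => by
    have := (continuous_apply j).comp (hφ (rank j + 1)).1.1.continuous_uncurry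
    exact this
  refine ⟨u, hu, fun x => ⟨fun j hj c c' hcc' => (hlocal _ x).1 j hj hcc',
    fun c j hj => (hlocal _ x).2 c j hj⟩, fun k => Homeomorph.ext fun c => funext fun j => ?_⟩
  by_cases hj : j ∈ N
  · exact ((hφ _).1.2.2 k c j ⟨hj, Nat.lt_succ_self _⟩).1
  · exact ((hlocal _ k).2 c j hj).trans ((hwN k).2 c j hj).symm

end CountableExtension

theorem exists_countable_closure {μ : Type*} (D : μ → Finset μ) (j₀ : μ) :
    ∃ T : Set μ, T.Countable ∧ j₀ ∈ T ∧ ∀ j ∈ T, ↑(D j) ⊆ T := by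
  obtain ⟨R, hR₀, hR⟩ : ∃ R : ℕ → Finset μ, R 0 = {j₀} ∧ ∀ n, R (n + 1) = (R n).biUnion D :=
    ⟨fun n => Nat.rec {j₀} (fun _ s => s.biUnion D) n, rfl, fun _ => rfl⟩
  refine ⟨⋃ n, (R n : Set μ), countable_iUnion fun n => (R n).countable_toSet,
    mem_iUnion.2 ⟨0, by simp [hR₀]⟩, fun j hj i hi => ?_⟩
  obtain ⟨n, hn⟩ := mem_iUnion.1 hj
  exact mem_iUnion.2 ⟨n + 1, by rw [hR]; exact Finset.mem_biUnion.2 ⟨j, hn, hi⟩⟩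

theorem exists_countable_closed_under_dependence {Y μ : Type*} [TopologicalSpace Y]
    [CompactSpace Y] [T2Space Y] {h : Y → (μ → Bool) ≃ₜ (μ → Bool)}
    (hh : Continuous fun p : Y × (μ → Bool) => h p.1 p.2) (j₀ : μ) :
    ∃ T : Set μ, T.Countable ∧ j₀ ∈ T ∧
      ∀ y, ∀ j ∈ T, DependsOn (fun c => h y c j) T ∧ DependsOn (fun c => (h y).symm c j) T := by
  have hdep : ∀ j, ∃ D : Finset μ, ∀ y,
      DependsOn (fun c => h y c j) D ∧ DependsOn (fun c => (h y).symm c j) D := by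
    intro j
    obtain ⟨D₁, hD₁⟩ := exists_finset_dependsOn ((continuous_apply j).comp hh)
    obtain ⟨D₂, hD₂⟩ := exists_finset_dependsOn
      ((continuous_apply j).comp (continuous_symm_uncurry_of_compactSpace hh))
    exact ⟨D₁ ∪ D₂, fun y => ⟨(hD₁ y).mono (by simp), (hD₂ y).mono (by simp)⟩⟩
  choose D hD using hdep
  obtain ⟨T, hT, hj₀T, hDT⟩ := exists_countable_closure D j₀
  exact ⟨T, hT, hj₀T, fun y j hj => ⟨(hD j y).1.mono (hDT j hj), (hD j y).2.mono (hDT j hj)⟩⟩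

def Homeomorph.shear {X Y : Type*} [TopologicalSpace X] [TopologicalSpace Y] (e : Y → X ≃ₜ X)
    (he : Continuous fun p : Y × X => e p.1 p.2)
    (he' : Continuous fun p : Y × X => (e p.1).symm p.2) {r : X → Y} (hr : Continuous r)
    (hre : ∀ y x, r (e y x) = r x) : X ≃ₜ X where
  toFun x := e (r x) x
  invFun x := (e (r x)).symm x
  left_inv x := by simp only [hre, Homeomorph.symm_apply_apply]
  right_inv x := by
    have : r ((e (r x)).symm x) = r x := by
      rw [← hre (r x) ((e (r x)).symm x), Homeomorph.apply_symm_apply]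
    simp only [this, Homeomorph.apply_symm_apply]
  continuous_toFun := he.comp (hr.prodMk continuous_id)
  continuous_invFun := he'.comp (hr.prodMk continuous_id)

section FiberwiseExtension

variable {Z μ : Type*} [TopologicalSpace Z] [CompactSpace Z] [T2Space Z] {S N : Set μ}

theorem exists_shear_of_isLocal (hSN : Disjoint S N)
    {W : Z × (μ → Bool) → (μ → Bool) ≃ₜ (μ → Bool)}
    (hW : Continuous fun p : (Z × (μ → Bool)) × (μ → Bool) => W p.1 p.2)
    (hWN : ∀ p, IsLocal N (W p)) :
    ∃ v : Z → (μ → Bool) ≃ₜ (μ → Bool), Continuous (fun p : Z × (μ → Bool) => v p.1 p.2) ∧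
      (∀ z, IsLocal (S ∪ N) (v z)) ∧ (∀ z c, ∀ j ∉ N, (v z).symm c j = c j) ∧
      ∀ z c, v z c = W (z, S.piecewise c fun _ => false) c := by
  let πS : (μ → Bool) → μ → Bool := fun c => S.piecewise c fun _ => false
  have hπS : Continuous πS := continuous_id.piecewise_pi continuous_const
  have hπS_eq : ∀ c c', (∀ i ∈ S, c i = c' i) → πS c = πS c' := fun c c' hcc' => by
    funext i
    by_cases hi : i ∈ S <;> simp [πS, hi, hcc']
  have hWS : ∀ p c, πS (W p c) = πS c := fun p c =>
    hπS_eq _ _ fun i hi => (hWN p).2 c i (disjoint_left.1 hSN hi)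
  have hslice : ∀ z : Z, Continuous fun p : (μ → Bool) × (μ → Bool) => ((z, p.1), p.2) :=
    fun z => (continuous_const.prodMk continuous_fst).prodMk continuous_snd
  refine ⟨fun z => .shear (fun a => W (z, a)) (hW.comp (hslice z))
    ((continuous_symm_uncurry_of_compactSpace hW).comp (hslice z)) hπS fun a => hWS (z, a),
    hW.comp ((continuous_fst.prodMk (hπS.comp continuous_snd)).prodMk continuous_snd),
    fun z => ⟨fun j hj c c' hcc' => ?_, fun c j hj => (hWN _).2 c j fun h => hj (Or.inr h)⟩,
    fun z c j hj => (hWN _).symm_apply_of_notMem c hj, fun z c => rfl⟩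
  show W (z, πS c) c j = W (z, πS c') c' j
  rw [hπS_eq c c' fun i hi => hcc' i (Or.inl hi)]
  by_cases hjN : j ∈ N
  · exact (hWN _).1 j hjN fun i hi => hcc' i (Or.inr hi)
  · rw [(hWN _).2 c j hjN, (hWN _).2 c' j hjN]
    exact hcc' j hj

variable [TotallyDisconnectedSpace Z] {K : Set Z} {h : K → (μ → Bool) ≃ₜ (μ → Bool)}

theorem exists_slices_extension (hK : IsClosed K)
    (hh : Continuous fun p : K × (μ → Bool) => h p.1 p.2) (hSN : Disjoint S N) (hN : N.Countable)
    (hS : ∀ k, Descends S (h k) ∧ Descends S (h k).symm)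
    (hSN' : ∀ k, Descends (S ∪ N) (h k) ∧ Descends (S ∪ N) (h k).symm) :
    ∃ W : Z × (μ → Bool) → (μ → Bool) ≃ₜ (μ → Bool),
      Continuous (fun p : (Z × (μ → Bool)) × (μ → Bool) => W p.1 p.2) ∧ (∀ p, IsLocal N (W p)) ∧
      ∀ (k : K) a c, ∀ j ∈ N, W (k, a) c j = h k (S.piecewise a c) j := by
  let w : (Prod.fst ⁻¹' K : Set (Z × (μ → Bool))) → (μ → Bool) ≃ₜ (μ → Bool) := fun p =>
    slice (h ⟨p.1.1, p.2⟩) hSN (hS _) (hSN' _) p.1.2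
  have hw : Continuous fun q : (Prod.fst ⁻¹' K : Set (Z × (μ → Bool))) × (μ → Bool) =>
      w q.1 q.2 := by
    have hbase : Continuous fun q : (Prod.fst ⁻¹' K : Set (Z × (μ → Bool))) × (μ → Bool) =>
        q.1.1 := continuous_subtype_val.comp continuous_fst
    exact (hh.comp ((continuous_fst.comp hbase).subtype_mk _ |>.prodMk
      ((continuous_snd.comp hbase).piecewise_pi continuous_snd))).piecewise_pi continuous_snd
  have hwN : ∀ p, IsLocal N (w p) := fun p => by
    refine ⟨fun j hj c c' hcc' => ?_, fun c j hj => ?_⟩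
    · simp only [w, slice_apply]
      rw [sliceFun_apply_of_mem _ _ _ hj, sliceFun_apply_of_mem _ _ _ hj]
      refine (hSN' _).1 j (Or.inr hj) fun i hi => ?_
      by_cases hiS : i ∈ S
      · simp [hiS]
      · simp only [S.piecewise_eq_of_notMem _ _ hiS]
        exact hcc' i (hi.resolve_left hiS)
    · simp only [w, slice_apply]
      exact sliceFun_apply_of_notMem _ _ _ hj
  obtain ⟨W, hW, hWN, hWw⟩ := exists_extension_of_countable (hK.preimage continuous_fst) hw hwN hN
  refine ⟨W, hW, hWN, fun k a c j hj => ?_⟩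
  rw [show W (k, a) = w ⟨(k, a), k.2⟩ from hWw ⟨(k, a), k.2⟩]
  simp only [w, slice_apply]
  exact sliceFun_apply_of_mem _ _ _ hj

end FiberwiseExtension
section ZornExtension

variable {Z μ : Type*} [TopologicalSpace Z] {K : Set Z} {h : K → (μ → Bool) ≃ₜ (μ → Bool)}

variable (K h) in
structure PartialExtension where
  S : Set μ
  u : Z → (μ → Bool) ≃ₜ (μ → Bool)
  continuous_uncurry : Continuous fun p : Z × (μ → Bool) => u p.1 p.2
  isLocal : ∀ z, IsLocal S (u z)
  apply_eq : ∀ k : K, ∀ c, ∀ j ∈ S, u k c j = h k c j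

namespace PartialExtension

instance : Preorder (PartialExtension K h) where
  le a b := a.S ⊆ b.S ∧ ∀ z, AgreesOn a.S (b.u z) (a.u z)
  le_refl a := ⟨subset_rfl, fun _ => .refl _ _⟩
  le_trans _ _ _ hab hbc := ⟨hab.1.trans hbc.1, fun z => ((hbc.2 z).mono hab.1).trans (hab.2 z)⟩

instance : Inhabited (PartialExtension K h) :=
  ⟨⟨∅, fun _ => .refl _, continuous_snd, fun _ => ⟨fun _ hj => absurd hj (notMem_empty _),
    fun _ _ _ => rfl⟩, fun _ _ _ hj => absurd hj (notMem_empty _)⟩⟩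

theorem bddAbove_of_isChain {ch : Set (PartialExtension K h)} (hch : IsChain (· ≤ ·) ch) :
    BddAbove ch := by
  let sel : μ → PartialExtension K h := fun j =>
    if hj : ∃ s ∈ ch, j ∈ s.S then hj.choose else default
  have hsel_mem : ∀ j, ∀ i ∈ (sel j).S, sel j ∈ ch := fun j i hi => by
    by_cases hj : ∃ s ∈ ch, j ∈ s.S
    · simp only [sel, dif_pos hj]
      exact hj.choose_spec.1
    · simp only [sel, dif_neg hj] at hi
      exact absurd hi (notMem_empty i)
  have hsel : ∀ s ∈ ch, ∀ j ∈ s.S, j ∈ (sel j).S := fun s hs j hj => by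
    have hj' : ∃ s ∈ ch, j ∈ s.S := ⟨s, hs, hj⟩
    simp only [sel, dif_pos hj']
    exact hj'.choose_spec.2
  have hcompat : ∀ s ∈ ch, ∀ j ∈ s.S, ∀ z c,
      (sel j).u z c j = s.u z c j ∧ ((sel j).u z).symm c j = (s.u z).symm c j := by
    intro s hs j hj z c
    rcases hch.total (hsel_mem j j (hsel s hs j hj)) hs with hle | hle
    · exact (hle.2 z c j (hsel s hs j hj)).imp Eq.symm Eq.symm
    · exact hle.2 z c j hj
  have hS : ∀ j, j ∈ ⋃ s ∈ ch, s.S ↔ j ∈ (sel j).S := fun j =>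
    ⟨fun hj => by obtain ⟨s, hs, hjs⟩ := mem_iUnion₂.1 hj; exact hsel s hs j hjs,
      fun hj => mem_iUnion₂.2 ⟨_, hsel_mem j j hj, hj⟩⟩
  let u : Z → (μ → Bool) ≃ₜ (μ → Bool) := fun z =>
    .glue (fun j => (sel j).u z) (fun j => (sel j).isLocal z)
      fun j i hi => hcompat _ (hsel_mem j i hi) i hi z
  have hu : Continuous fun p : Z × (μ → Bool) => u p.1 p.2 := continuous_pi fun j => by
    have := (continuous_apply j).comp (sel j).continuous_uncurry
    exact this
  refine ⟨⟨⋃ s ∈ ch, s.S, u, hu, fun z => ⟨fun j hj c c' hcc' => ?_, fun c j hj => ?_⟩,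
    fun k c j hj => ?_⟩, fun s hs => ⟨subset_biUnion_of_mem (u := fun s : PartialExtension K h =>
      s.S) hs, fun z c j hj => hcompat s hs j hj z c⟩⟩
  · exact ((sel j).isLocal z).1 j ((hS j).1 hj) fun i hi =>
      hcc' i (mem_iUnion₂.2 ⟨_, hsel_mem j i hi, hi⟩)
  · exact ((sel j).isLocal z).2 c j fun h => hj ((hS j).2 h)
  · exact (sel j).apply_eq k c j ((hS j).1 hj)

theorem descends (m : PartialExtension K h) (k : K) :
    Descends m.S (h k) ∧ Descends m.S (h k).symm := by
  have hsymm : ∀ c, ∀ j ∈ m.S, (h k).symm c j = (m.u k).symm c j :=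
    fun c => (m.isLocal k).eq_symm_apply fun i hi =>
      (m.apply_eq k _ i hi).trans (congrFun ((h k).apply_symm_apply c) i)
  refine ⟨fun j hj c c' hcc' => ?_, fun j hj c c' hcc' => ?_⟩
  · exact (m.apply_eq k c j hj).symm.trans
      (((m.isLocal k).1 j hj hcc').trans (m.apply_eq k c' j hj))
  · exact (hsymm c j hj).trans (((m.isLocal k).symm.1 j hj hcc').trans (hsymm c' j hj).symm)

variable [CompactSpace Z] [T2Space Z]

theorem exists_le_union (m : PartialExtension K h) {N : Set μ} (hSN : Disjoint m.S N)
    {W : Z × (μ → Bool) → (μ → Bool) ≃ₜ (μ → Bool)}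
    (hW : Continuous fun p : (Z × (μ → Bool)) × (μ → Bool) => W p.1 p.2)
    (hWN : ∀ p, IsLocal N (W p))
    (hWh : ∀ (k : K) a c, ∀ j ∈ N, W (k, a) c j = h k (m.S.piecewise a c) j) :
    ∃ m' : PartialExtension K h, m ≤ m' ∧ m'.S = m.S ∪ N := by
  obtain ⟨v, hv, hv_local, hv_symm, hv_apply⟩ := exists_shear_of_isLocal hSN hW hWN
  have hvN : ∀ z c, ∀ j ∉ N, v z c j = c j := fun z c j hj => by
    rw [hv_apply]
    exact (hWN _).2 c j hj
  have hmv : ∀ z c, ∀ j ∈ m.S, m.u z (v z c) j = m.u z c j := fun z c j hj =>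
    (m.isLocal z).1 j hj fun i hi => hvN z c i (disjoint_left.1 hSN hi)
  refine ⟨⟨m.S ∪ N, fun z => (v z).trans (m.u z),
    m.continuous_uncurry.comp (continuous_fst.prodMk hv),
    fun z => ((m.isLocal z).mono subset_union_left).comp (hv_local z), fun k c j hj => ?_⟩,
    ⟨subset_union_left, fun z c j hj => ⟨hmv z c j hj, hv_symm z _ j (disjoint_left.1 hSN hj)⟩⟩,
    rfl⟩
  show m.u k (v k c) j = h k c j
  rcases hj with hjS | hjN
  · rw [hmv k c j hjS, m.apply_eq k c j hjS]
  · rw [(m.isLocal k).2 _ j (disjoint_right.1 hSN hjN), hv_apply, hWh k _ c j hjN]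
    have hpiece : m.S.piecewise (m.S.piecewise c fun _ => false) c = c := by
      funext i
      by_cases hi : i ∈ m.S <;> simp [hi]
    rw [hpiece]

variable [TotallyDisconnectedSpace Z]

theorem exists_le_mem (hK : IsClosed K) (hh : Continuous fun p : K × (μ → Bool) => h p.1 p.2)
    (m : PartialExtension K h) {j₀ : μ} (hj₀ : j₀ ∉ m.S) :
    ∃ m' : PartialExtension K h, m ≤ m' ∧ j₀ ∈ m'.S := by
  have : CompactSpace K := isCompact_iff_compactSpace.1 hK.isCompact
  obtain ⟨T, hT, hj₀T, hTdep⟩ := exists_countable_closed_under_dependence hh j₀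
  have hSN : Disjoint m.S (T \ m.S) := disjoint_sdiff_right
  have hTSN : T ⊆ m.S ∪ T \ m.S := fun i hi => (em (i ∈ m.S)).imp id fun h => ⟨hi, h⟩
  have hdesc : ∀ k, Descends (m.S ∪ T \ m.S) (h k) ∧ Descends (m.S ∪ T \ m.S) (h k).symm :=
    fun k => by
      refine ⟨fun j hj => ?_, fun j hj => ?_⟩ <;> rcases hj with hjS | hjN
      · exact ((m.descends k).1 j hjS).mono subset_union_left
      · exact (hTdep k j hjN.1).1.mono hTSN
      · exact ((m.descends k).2 j hjS).mono subset_union_left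
      · exact (hTdep k j hjN.1).2.mono hTSN
  obtain ⟨W, hW, hWN, hWh⟩ :=
    exists_slices_extension hK hh hSN (hT.mono sdiff_subset) m.descends hdesc
  obtain ⟨m', hle, hS'⟩ := m.exists_le_union hSN hW hWN hWh
  exact ⟨m', hle, hS' ▸ Or.inr ⟨hj₀T, hj₀⟩⟩

end PartialExtension

theorem exists_fiberwise_homeomorph_extension [CompactSpace Z] [T2Space Z]
    [TotallyDisconnectedSpace Z] (hK : IsClosed K)
    (hh : Continuous fun p : K × (μ → Bool) => h p.1 p.2) :
    ∃ u : Z → (μ → Bool) ≃ₜ (μ → Bool), Continuous (fun p : Z × (μ → Bool) => u p.1 p.2) ∧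
      ∀ k : K, u k = h k := by
  obtain ⟨m, hm⟩ :=
    zorn_le (α := PartialExtension K h) fun _ hch => PartialExtension.bddAbove_of_isChain hch
  have hS : ∀ j, j ∈ m.S := fun j => by
    by_contra hj
    obtain ⟨m', hle, hj'⟩ := m.exists_le_mem hK hh hj
    exact hj ((hm hle).1 hj')
  exact ⟨m.u, m.continuous_uncurry,
    fun k => Homeomorph.ext fun c => funext fun j => m.apply_eq k c j (hS j)⟩

end ZornExtension

def Homeomorph.fiber {X Y : Type*} [TopologicalSpace X] [TopologicalSpace Y] (g : X × Y ≃ₜ X × Y)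
    {gB : X → X} (hgB : Injective gB) (hg : ∀ p, (g p).1 = gB p.1) (x : X) : Y ≃ₜ Y where
  toFun y := (g (x, y)).2
  invFun y := (g.symm (gB x, y)).2
  left_inv y := by
    have : g (x, y) = (gB x, (g (x, y)).2) := Prod.ext (hg _) rfl
    simp only
    rw [← this, g.symm_apply_apply]
  right_inv y := by
    have hx : (g.symm (gB x, y)).1 = x := hgB (by rw [← hg, g.apply_symm_apply])
    have : (x, (g.symm (gB x, y)).2) = g.symm (gB x, y) := Prod.ext hx.symm rfl
    simp only
    rw [this, g.apply_symm_apply]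
  continuous_toFun := continuous_snd.comp (g.continuous.comp (Continuous.prodMk_right x))
  continuous_invFun := continuous_snd.comp (g.symm.continuous.comp (Continuous.prodMk_right _))

theorem exists_homeomorph_extension_of_fibered {X Y μ : Type*} [TopologicalSpace X]
    [TopologicalSpace Y] [CompactSpace Y] [T2Space Y] [TotallyDisconnectedSpace Y]
    (Φ : X ≃ₜ Y × (μ → Bool)) {K : Set Y} (hK : IsClosed K) {P : Set X}
    (hP : P = (fun x => (Φ x).1) ⁻¹' K) (f : P ≃ₜ P) (FK : Y ≃ₜ Y)
    (hf : ∀ p : P, (Φ (f p)).1 = FK (Φ p).1) : ∃ F : X ≃ₜ X, ∀ p : P, F p = f p := by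
  have hmem : ∀ x, x ∈ P ↔ (Φ x).1 ∈ K := fun x => by rw [hP]; rfl
  let ψ : P ≃ₜ K × (μ → Bool) :=
    { toFun := fun p => (⟨(Φ p).1, (hmem p).1 p.2⟩, (Φ p).2)
      invFun := fun q => ⟨Φ.symm (q.1, q.2), (hmem _).2 (by simp)⟩
      left_inv := fun p => Subtype.ext (by simp)
      right_inv := fun q => by ext <;> simp
      continuous_toFun := by fun_prop
      continuous_invFun := by fun_prop }
  have hFK : ∀ k ∈ K, FK k ∈ K := fun k hk => by
    have hp := hf (ψ.symm (⟨k, hk⟩, fun _ => false))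
    simp only [ψ, Homeomorph.homeomorph_mk_coe_symm, Equiv.coe_fn_symm_mk,
      Homeomorph.apply_symm_apply] at hp
    exact hp ▸ (hmem _).1 (f _).2
  let g : K × (μ → Bool) ≃ₜ K × (μ → Bool) := ψ.symm.trans (f.trans ψ)
  have hg : ∀ q, (g q).1 = ⟨FK q.1, hFK _ q.1.2⟩ := fun q => Subtype.ext (by simp [g, ψ, hf])
  obtain ⟨u, hu, huh⟩ := exists_fiberwise_homeomorph_extension hK
    (h := g.fiber (gB := fun k => ⟨FK k, hFK k k.2⟩)
      (fun k k' hkk' => Subtype.ext (FK.injective (congrArg Subtype.val hkk'))) hg)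
    (continuous_snd.comp g.continuous)
  let G : Y × (μ → Bool) ≃ₜ Y × (μ → Bool) :=
    ((FK.continuous.comp continuous_fst).prodMk hu).homeoOfEquivCompactToT2
      (f := Equiv.prodShear FK.toEquiv fun y => (u y).toEquiv)
  refine ⟨Φ.trans (G.trans Φ.symm), fun p => ?_⟩
  rw [Homeomorph.trans_apply, Homeomorph.trans_apply, Homeomorph.symm_apply_eq]
  refine Prod.ext (hf p).symm ?_
  show u (ψ p).1 (Φ p).2 = (Φ (f p)).2
  rw [huh (ψ p).1]
  show (ψ (f (ψ.symm (ψ p)))).2 = (Φ (f p)).2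
  rw [ψ.symm_apply_apply]
  rfl

def Homeomorph.piUncurry (ι κ α : Type*) [TopologicalSpace α] : (ι → κ → α) ≃ₜ (ι × κ → α) where
  toEquiv := (Equiv.curry ι κ α).symm
  continuous_toFun := continuous_pi fun p => (continuous_apply p.2).comp (continuous_apply p.1)
  continuous_invFun := continuous_pi fun i => continuous_pi fun k => continuous_apply (i, k)

def cantorCubeSplit {A : Type*} (B : Set A) :
    (A → ℕ → Bool) ≃ₜ (B → ℕ → Bool) × ({a // a ∉ B} × ℕ → Bool) :=
  (Homeomorph.piEquivPiSubtypeProd (· ∈ B) fun _ => ℕ → Bool).trans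
    ((Homeomorph.refl _).prodCongr (Homeomorph.piUncurry _ _ _))

end

theorem stmt12_general {A : Type u} (P : Set (A → ℕ → Bool)) (hP : IsClosed P)
    (f : P ≃ₜ P)
    (B : Set A)
    (hprod : P = proj B ⁻¹' (proj B '' P))
    (fB : (proj B '' P : Set (∀ b : B, ℕ → Bool)) ≃ₜ
      (proj B '' P : Set (∀ b : B, ℕ → Bool)))
    (hfB : ∀ p : P, (fB ⟨proj B p.1, ⟨p.1, p.2, rfl⟩⟩).1 = proj B (f p).1)
    (hext : ∃ FB : (∀ b : B, ℕ → Bool) ≃ₜ (∀ b : B, ℕ → Bool),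
      ∀ y : (proj B '' P : Set (∀ b : B, ℕ → Bool)), FB ↑y = ↑(fB y)) :
    ∃ F : (A → ℕ → Bool) ≃ₜ (A → ℕ → Bool), ∀ p : P, F ↑p = ↑(f p) := by
  obtain ⟨FB, hFB⟩ := hext
  have hproj : Continuous (proj B : (A → ℕ → Bool) → B → ℕ → Bool) :=
    continuous_fst.comp (cantorCubeSplit B).continuous
  exact exists_homeomorph_extension_of_fibered (cantorCubeSplit B)
    (hP.isCompact.image hproj).isClosed hprod f FB fun p => ((hFB _).trans (hfB p)).symm

/-- Corollary 3.5 of the paper: if `P` is a proper closed subset of the Cantor cube `𝔠^A`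
(where `𝔠 = ℕ → Bool` is the Cantor set) of the form `P = P_B × 𝔠^{A∖B}` for a proper
subset `B ⊊ A`, and the self-homeomorphism `f` of `P` projects to a self-homeomorphism
`f_B` of `P_B` that extends over `𝔠^B`, then `f` extends over `𝔠^A`. -/
theorem stmt12 {A : Type u} (P : Set (A → ℕ → Bool)) (hP : IsClosed P)
    (hPproper : P ≠ univ) (f : P ≃ₜ P)
    (B : Set A) (hBproper : B ≠ univ)
    (hprod : P = proj B ⁻¹' (proj B '' P))
    (fB : (proj B '' P : Set (∀ b : B, ℕ → Bool)) ≃ₜ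
      (proj B '' P : Set (∀ b : B, ℕ → Bool)))
    (hfB : ∀ p : P, (fB ⟨proj B p.1, ⟨p.1, p.2, rfl⟩⟩).1 = proj B (f p).1)
    (hext : ∃ FB : (∀ b : B, ℕ → Bool) ≃ₜ (∀ b : B, ℕ → Bool),
      ∀ y : (proj B '' P : Set (∀ b : B, ℕ → Bool)), FB ↑y = ↑(fB y)) :
    ∃ F : (A → ℕ → Bool) ≃ₜ (A → ℕ → Bool), ∀ p : P, F ↑p = ↑(f p) :=
  stmt12_general P hP f B hprod fB hfB hext
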